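/- Fix n ≥ 1, rounds t_0 ≤ t_3, an initial load vector y^{t_0} : [n] → ℕ, and two (deterministic) assignments of bins z_j^t, \tilde{z}_j^t ∈ [n] for j ∈ [n], t ∈ [t_0, t_3) that agree in all coordinates except exactly one pair (j, r). Let y^t and \tilde{y}^t be the corresponding idealized trajectories (with y^{t_0} = \tilde{y}^{t_0}) and let G_{t_0}^{t_3} and \tilde{G}_{t_0}^{t_3} be the corresponding counts of empty bin/round pairs. Then |G_{t_0}^{t_3} − \tilde{G}_{t_0}^{t_3}| ≤ 1. -/

import Mathlib

open Finset

/-- One round of the idealized process: one ball is removed from each non-empty bin and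
exactly `n` balls are allocated, one according to each of the `n` bin choices. -/
def idealStep {n : ℕ} (y : Fin n → ℕ) (z : Fin n → Fin n) (i : Fin n) : ℕ :=
  y i - (if 0 < y i then 1 else 0) + (Finset.univ.filter fun j : Fin n => z j = i).card

/-- The idealized process trajectory started from the load vector `y0`. -/
def ideal {n : ℕ} (y0 : Fin n → ℕ) (Z : ℕ → Fin n → Fin n) : ℕ → Fin n → ℕ
  | 0 => y0
  | t + 1 => idealStep (ideal y0 Z t) (Z t)

/-- The number of empty bin/round pairs `G_{t₀}^{t₃}` of the idealized process started at
round `t₀` from `y0`, using the bin assignment `z` (where `z t` is used in round `t`). -/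
def idealEmptyPairs {n : ℕ} (t0 t3 : ℕ) (y0 : Fin n → ℕ) (z : ℕ → Fin n → Fin n) : ℕ :=
  ∑ t ∈ Finset.Icc t0 t3,
    (Finset.univ.filter fun i : Fin n =>
      ideal y0 (fun u => z (t0 + u)) (t - t0) i = 0).card

/-! Couple both processes with the one in which ball `j` of round `r` is never thrown. Each of
the two trajectories is this common trajectory plus one extra ball, which stays in its bin until
that bin is empty in the common trajectory; in that round the extra ball is the one removed, the
two empty-bin counts differ by exactly one, and from then on the trajectories coincide. So each
`G` is the common count minus `0` or `1`, and the two differ by at most `1`. -/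

section IdealProcess

variable {n : ℕ}

def emptyBins (y : Fin n → ℕ) : ℕ := #{i | y i = 0}

theorem ideal_add (y0 : Fin n → ℕ) (Z : ℕ → Fin n → Fin n) (s k : ℕ) :
    ideal y0 Z (s + k) = ideal (ideal y0 Z s) (fun u => Z (s + u)) k := by
  induction k with
  | zero => rfl
  | succ k ih => exact congrArg₂ idealStep ih rfl

theorem ideal_congr (y0 : Fin n → ℕ) {Z Z' : ℕ → Fin n → Fin n} {s : ℕ}
    (h : ∀ u < s, Z u = Z' u) : ideal y0 Z s = ideal y0 Z' s := by
  induction s with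
  | zero => rfl
  | succ s ih =>
    exact congrArg₂ idealStep (ih fun u hu => h u (hu.trans s.lt_succ_self)) (h s s.lt_succ_self)

theorem emptyBins_eq_add_single (v : Fin n → ℕ) (a : Fin n) :
    emptyBins v = emptyBins (v + Pi.single a 1) + if v a = 0 then 1 else 0 := by
  have h_off :
      ∑ i ∈ univ.erase a, (if (v + Pi.single a 1 : Fin n → ℕ) i = 0 then 1 else 0) =
        ∑ i ∈ univ.erase a, if v i = 0 then 1 else 0 :=
    sum_congr rfl fun i hi => by simp [ne_of_mem_erase hi]
  rw [emptyBins, emptyBins, card_filter, card_filter, ← add_sum_erase _ _ (mem_univ a),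
    ← add_sum_erase _ _ (mem_univ a), h_off]
  simp [add_comm]

theorem idealStep_add_single_of_ne_zero {v : Fin n → ℕ} {a : Fin n} (h : v a ≠ 0)
    (zz : Fin n → Fin n) :
    idealStep (v + Pi.single a 1) zz = idealStep v zz + Pi.single a 1 := by
  funext i
  rcases eq_or_ne i a with rfl | hi
  · simp only [idealStep, Pi.add_apply, Pi.single_eq_same]
    split_ifs <;> omega
  · simp [idealStep, hi]

theorem idealStep_add_single_of_eq_zero {v : Fin n → ℕ} {a : Fin n} (h : v a = 0)
    (zz : Fin n → Fin n) :
    idealStep (v + Pi.single a 1) zz = idealStep v zz := by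
  funext i
  rcases eq_or_ne i a with rfl | hi
  · simp [idealStep, h]
  · simp [idealStep, hi]

theorem sum_emptyBins_ideal_add_single (v : Fin n → ℕ) (a : Fin n) (Z : ℕ → Fin n → Fin n)
    (T : ℕ) :
    ∑ s ∈ range T, emptyBins (ideal (v + Pi.single a 1) Z s) ≤
        ∑ s ∈ range T, emptyBins (ideal v Z s) ∧
      ∑ s ∈ range T, emptyBins (ideal v Z s) ≤
        ∑ s ∈ range T, emptyBins (ideal (v + Pi.single a 1) Z s) + 1 := by
  induction T generalizing v Z with
  | zero => simp
  | succ T ih =>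
    rw [sum_range_succ', sum_range_succ']
    simp only [add_comm _ 1, ideal_add _ _ 1]
    have h0 := emptyBins_eq_add_single v a
    by_cases hva : v a = 0
    · rw [if_pos hva] at h0
      simp only [ideal, idealStep_add_single_of_eq_zero hva]
      omega
    · rw [if_neg hva] at h0
      have := ih (idealStep v (Z 0)) (fun u => Z (1 + u))
      simp only [ideal, idealStep_add_single_of_ne_zero hva]
      omega

def idealStepWithout (y : Fin n → ℕ) (z : Fin n → Fin n) (j i : Fin n) : ℕ :=
  y i - (if 0 < y i then 1 else 0) + #{j' ∈ univ.erase j | z j' = i}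

theorem idealStep_eq_idealStepWithout_add_single (y : Fin n → ℕ) (z : Fin n → Fin n)
    (j : Fin n) :
    idealStep y z = idealStepWithout y z j + Pi.single (z j) 1 := by
  funext i
  simp only [idealStep, idealStepWithout, Pi.add_apply, card_filter,
    ← add_sum_erase _ _ (mem_univ j), Pi.single_apply, eq_comm (a := i)]
  ring

theorem idealStepWithout_congr (y : Fin n → ℕ) {z z' : Fin n → Fin n} {j : Fin n}
    (h : ∀ j' ≠ j, z j' = z' j') : idealStepWithout y z j = idealStepWithout y z' j := by
  funext i
  simp only [idealStepWithout]
  congr 2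
  exact filter_congr fun j' hj' => by rw [h j' (ne_of_mem_erase hj')]

theorem sum_emptyBins_ideal_split (y0 : Fin n → ℕ) (Z : ℕ → Fin n → Fin n) {R T : ℕ}
    (hRT : R < T) :
    ∑ s ∈ range (T + 1), emptyBins (ideal y0 Z s) =
      ∑ s ∈ range (R + 1), emptyBins (ideal y0 Z s) + ∑ k ∈ range (T - R),
        emptyBins (ideal (ideal y0 Z (R + 1)) (fun u => Z (R + 1 + u)) k) := by
  rw [show T + 1 = R + 1 + (T - R) by omega, sum_range_add]
  simp only [ideal_add]

theorem abs_sum_emptyBins_ideal_sub_le_one (y0 : Fin n → ℕ) {Z Z' : ℕ → Fin n → Fin n}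
    {R T : ℕ} (j : Fin n) (hRT : R < T)
    (hagree : ∀ u < T, ∀ j', (u, j') ≠ (R, j) → Z u j' = Z' u j') :
    |((∑ s ∈ range (T + 1), emptyBins (ideal y0 Z s) : ℕ) : ℤ) -
      ((∑ s ∈ range (T + 1), emptyBins (ideal y0 Z' s) : ℕ) : ℤ)| ≤ 1 := by
  have hround : ∀ u < T, u ≠ R → Z u = Z' u := fun u hu huR =>
    funext fun j' => hagree u hu j' (by simp [huR])
  have hprefix : ∀ s ≤ R, ideal y0 Z s = ideal y0 Z' s := fun s hs =>
    ideal_congr y0 fun u hu => hround u (by omega) (by omega)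
  have hsuffix : ∀ y, ∀ k < T - R,
      ideal y (fun u => Z' (R + 1 + u)) k = ideal y (fun u => Z (R + 1 + u)) k := fun y k hk =>
    ideal_congr y fun u hu => (hround _ (by omega) (by omega)).symm
  set v := idealStepWithout (ideal y0 Z R) (Z R) j
  have hZ : ideal y0 Z (R + 1) = v + Pi.single (Z R j) 1 :=
    idealStep_eq_idealStepWithout_add_single _ _ j
  have hZ' : ideal y0 Z' (R + 1) = v + Pi.single (Z' R j) 1 := by
    rw [ideal, ← hprefix R le_rfl, idealStep_eq_idealStepWithout_add_single _ _ j,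
      ← idealStepWithout_congr _ (z := Z R) fun j' hj' => hagree R hRT j' (by simp [hj'])]
  have hsame_prefix : ∑ s ∈ range (R + 1), emptyBins (ideal y0 Z' s) =
      ∑ s ∈ range (R + 1), emptyBins (ideal y0 Z s) :=
    sum_congr rfl fun s hs => by rw [hprefix s (Nat.lt_succ_iff.mp (mem_range.mp hs))]
  have hsame_suffix : ∑ k ∈ range (T - R), emptyBins (ideal (v + Pi.single (Z' R j) 1)
        (fun u => Z' (R + 1 + u)) k) =
      ∑ k ∈ range (T - R), emptyBins (ideal (v + Pi.single (Z' R j) 1)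
        (fun u => Z (R + 1 + u)) k) :=
    sum_congr rfl fun k hk => by rw [hsuffix _ k (mem_range.mp hk)]
  obtain ⟨hZ_le, hZ_ge⟩ :=
    sum_emptyBins_ideal_add_single v (Z R j) (fun u => Z (R + 1 + u)) (T - R)
  obtain ⟨hZ'_le, hZ'_ge⟩ :=
    sum_emptyBins_ideal_add_single v (Z' R j) (fun u => Z (R + 1 + u)) (T - R)
  rw [sum_emptyBins_ideal_split y0 Z hRT, sum_emptyBins_ideal_split y0 Z' hRT, hZ, hZ',
    hsame_prefix, hsame_suffix, abs_le]
  constructor <;> omega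

theorem idealEmptyPairs_eq_sum_range (t0 t3 : ℕ) (y0 : Fin n → ℕ)
    (z : ℕ → Fin n → Fin n) :
    idealEmptyPairs t0 t3 y0 z =
      ∑ s ∈ range (t3 + 1 - t0), emptyBins (ideal y0 (fun u => z (t0 + u)) s) := by
  rw [idealEmptyPairs, ← Ico_add_one_right_eq_Icc, sum_Ico_eq_sum_range]
  simp only [Nat.add_sub_cancel_left]
  rfl

end IdealProcess

theorem ideal_empty_pairs_lipschitz_general
    (n : ℕ) (t0 t3 : ℕ) (y0 : Fin n → ℕ)
    (z ztilde : ℕ → Fin n → Fin n)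
    (r : ℕ) (j : Fin n) (hr0 : t0 ≤ r) (hr3 : r < t3)
    (hagree : ∀ t : ℕ, t0 ≤ t → t < t3 → ∀ j' : Fin n, (t, j') ≠ (r, j) →
      z t j' = ztilde t j') :
    |(idealEmptyPairs t0 t3 y0 z : ℤ) - (idealEmptyPairs t0 t3 y0 ztilde : ℤ)| ≤ 1 := by
  rw [idealEmptyPairs_eq_sum_range, idealEmptyPairs_eq_sum_range,
    show t3 + 1 - t0 = t3 - t0 + 1 by omega]
  refine abs_sum_emptyBins_ideal_sub_le_one y0 j (R := r - t0) (by omega) fun u hu j' huj =>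
    hagree (t0 + u) (by omega) (by omega) j' fun h => huj ?_
  simp only [Prod.mk.injEq] at h ⊢
  omega

/-- **Lemma 4.8 (bounded differences).** If two deterministic bin assignments for the
rounds `[t₀, t₃)` agree everywhere except in exactly one coordinate `(r, j)`, then the
corresponding counts of empty bin/round pairs of the idealized process over `[t₀, t₃]`
(started from a common load vector) differ by at most `1`. -/
theorem ideal_empty_pairs_lipschitz
    (n : ℕ) (t0 t3 : ℕ) (ht : t0 ≤ t3) (y0 : Fin n → ℕ)
    (z ztilde : ℕ → Fin n → Fin n)
    (r : ℕ) (j : Fin n) (hr0 : t0 ≤ r) (hr3 : r < t3)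
    (hne : z r j ≠ ztilde r j)
    (hagree : ∀ t : ℕ, t0 ≤ t → t < t3 → ∀ j' : Fin n, (t, j') ≠ (r, j) →
      z t j' = ztilde t j') :
    |(idealEmptyPairs t0 t3 y0 z : ℤ) - (idealEmptyPairs t0 t3 y0 ztilde : ℤ)| ≤ 1 :=
  ideal_empty_pairs_lipschitz_general n t0 t3 y0 z ztilde r j hr0 hr3 hagree
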